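/- arXiv:1005.1130 — 4 statements merged into one kernel-verified Lean document; each statement's English description precedes it below -/
import Mathlib

section
/- Let (X, ρ) be a proper metric space (i.e., every closed ball {y ∈ X : ρ(x,y) ≤ R} is compact) and let (A_n)_{n∈ℕ} be a sequence of subsets of X such that: (1) limsup_{n→∞} diam(A_n) is finite; (2) each A_n is connected; (3) there exists a Cauchy sequence (x_n) in X with x_n ∈ A_n for every n. Then the Kuratowski limit supremum limsup_{n→∞} A_n := { x ∈ X : liminf_{n→∞} ρ(x, A_n) = 0 } is a connected subset of X. -/
/-!
The limit `x₀` of the Cauchy sequence lies in the Kuratowski limit supremum `K`, and `K` has an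
intermediate value property based at `x₀`: if `f` is continuous and `f x₀ < r < f y` with
`y ∈ K`, then for infinitely many `n` the connected set `A n` contains points with `f < r` (near
`x₀`) and with `f > r` (near `y`), hence meets the level set `{f = r}`, all inside a fixed compact
ball because the diameters are eventually bounded. A limit of such points lies in `K ∩ {f = r}`.
If closed sets `t ∋ x₀` and `t'` covered `K` with `K ∩ t ∩ t'` empty and `K ∩ t'` nonempty, then
`f = infDist · t - infDist · t'` would be negative at `x₀`, positive on `K ∩ t'` and nowhere zero
on `K`, a contradiction.
-/

/-- The Kuratowski limit supremum of a sequence of subsets of a metric space: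
`limsup A_n := { x : liminf ρ(x, A_n) = 0 }` (distances to sets taken in `[0,∞]`). -/
def kuratowskiLimsup {X : Type*} [MetricSpace X] (A : ℕ → Set X) : Set X :=
  {x | Filter.liminf (fun n => EMetric.infEdist x (A n)) Filter.atTop = 0}

open Filter Metric Set Topology

section KuratowskiLimsup

variable {X : Type*} [MetricSpace X] {A : ℕ → Set X}

theorem mem_kuratowskiLimsup_iff_frequently_infEDist_lt {z : X} :
    z ∈ kuratowskiLimsup A ↔ ∀ ε > 0, ∃ᶠ n in atTop, infEDist z (A n) < ε := by
  rw [kuratowskiLimsup, mem_ofPred_eq, ← nonpos_iff_eq_zero, liminf_le_iff]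
  rfl

theorem mem_kuratowskiLimsup_iff_frequently_inter_nonempty {z : X} :
    z ∈ kuratowskiLimsup A ↔ ∀ U ∈ 𝓝 z, ∃ᶠ n in atTop, (A n ∩ U).Nonempty := by
  rw [mem_kuratowskiLimsup_iff_frequently_infEDist_lt]
  constructor
  · intro h U hU
    obtain ⟨ε, hε, hball⟩ := EMetric.mem_nhds_iff.mp hU
    refine (h ε hε).mono fun n hn => ?_
    obtain ⟨p, hpA, hp⟩ := infEDist_lt_iff.mp hn
    exact ⟨p, hpA, hball (mem_eball'.mpr hp)⟩
  · intro h ε hε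
    exact (h _ (eball_mem_nhds z hε)).mono fun n ⟨p, hpA, hp⟩ =>
      (infEDist_le_edist_of_mem hpA).trans_lt (mem_eball'.mp hp)

theorem mem_kuratowskiLimsup_of_tendsto {x : ℕ → X} {x₀ : X} (hx : Tendsto x atTop (𝓝 x₀))
    (hxA : ∀ᶠ n in atTop, x n ∈ A n) : x₀ ∈ kuratowskiLimsup A :=
  mem_kuratowskiLimsup_iff_frequently_inter_nonempty.mpr fun _ hU =>
    ((hxA.and (hx.eventually hU)).mono fun n hn => ⟨x n, hn⟩).frequently

theorem kuratowskiLimsup_inter_nonempty_of_frequently {L : Set X} (hL : IsCompact L)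
    (h : ∃ᶠ n in atTop, (A n ∩ L).Nonempty) : (kuratowskiLimsup A ∩ L).Nonempty := by
  obtain ⟨φ, hφ, hφA⟩ := extraction_of_frequently_atTop h
  choose z hzA hzL using hφA
  obtain ⟨w, hwL, ψ, hψ, hzw⟩ := hL.tendsto_subseq hzL
  refine ⟨w, mem_kuratowskiLimsup_iff_frequently_inter_nonempty.mpr fun U hU => ?_, hwL⟩
  have hzU : ∀ᶠ k in atTop, (A (φ (ψ k)) ∩ U).Nonempty :=
    (hzw.eventually hU).mono fun k hk => ⟨z (ψ k), hzA (ψ k), hk⟩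
  exact (hφ.comp hψ).tendsto_atTop.frequently hzU.frequently

theorem Ioo_subset_image_kuratowskiLimsup (hconn : ∀ n, IsPreconnected (A n))
    {x : ℕ → X} {x₀ : X} (hx : Tendsto x atTop (𝓝 x₀)) (hxA : ∀ n, x n ∈ A n)
    {L : Set X} (hL : IsCompact L) (hAL : ∀ᶠ n in atTop, A n ⊆ L)
    {f : X → ℝ} (hf : Continuous f) {y : X} (hy : y ∈ kuratowskiLimsup A) :
    Ioo (f x₀) (f y) ⊆ f '' kuratowskiLimsup A := by
  rintro r ⟨hx₀r, hry⟩
  have hxr : ∀ᶠ n in atTop, f (x n) < r :=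
    (hf.tendsto x₀).comp hx |>.eventually (eventually_lt_nhds hx₀r)
  have hAr : ∃ᶠ n in atTop, (A n ∩ {p | r < f p}).Nonempty :=
    mem_kuratowskiLimsup_iff_frequently_inter_nonempty.mp hy _
      (hf.tendsto y |>.eventually (eventually_gt_nhds hry))
  have hAL' : ∃ᶠ n in atTop, (A n ∩ (L ∩ f ⁻¹' {r})).Nonempty := by
    refine (hAr.and_eventually (hxr.and hAL)).mono ?_
    rintro n ⟨⟨p, hpA, hp⟩, hxn, hnL⟩
    obtain ⟨q, hqA, hq⟩ := (hconn n).intermediate_value (hxA n) hpA hf.continuousOn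
      ⟨hxn.le, hp.le⟩
    exact ⟨q, hqA, hnL hqA, hq⟩
  obtain ⟨w, hwK, -, hw⟩ := kuratowskiLimsup_inter_nonempty_of_frequently
    (hL.inter_right (isClosed_singleton.preimage hf)) hAL'
  exact ⟨w, hwK, hw⟩

theorem eventually_subset_closedBall_of_limsup_ediam_ne_top
    (hdiam : limsup (fun n => ediam (A n)) atTop ≠ ⊤)
    {x : ℕ → X} {x₀ : X} (hx : Tendsto x atTop (𝓝 x₀)) (hxA : ∀ n, x n ∈ A n) :
    ∃ R, ∀ᶠ n in atTop, A n ⊆ closedBall x₀ R := by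
  set C := limsup (fun n => ediam (A n)) atTop + 1
  have hC : C ≠ ⊤ := ENNReal.add_ne_top.mpr ⟨hdiam, ENNReal.one_ne_top⟩
  have hdiamC : ∀ᶠ n in atTop, ediam (A n) < C :=
    eventually_lt_of_limsup_lt (ENNReal.lt_add_right hdiam one_ne_zero)
  refine ⟨C.toReal + 1, ?_⟩
  filter_upwards [hdiamC, hx.eventually (ball_mem_nhds x₀ one_pos)] with n hn hxn p hp
  have hpx : dist p (x n) ≤ C.toReal := by
    rw [dist_edist]
    exact ENNReal.toReal_mono hC ((edist_le_ediam_of_mem hp (hxA n)).trans hn.le)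
  calc dist p x₀ ≤ dist p (x n) + dist (x n) x₀ := dist_triangle _ _ _
    _ ≤ C.toReal + 1 := add_le_add hpx (mem_ball.mp hxn).le

end KuratowskiLimsup

theorem isPreconnected_of_forall_Ioo_subset_image {X : Type*} [MetricSpace X] {K : Set X}
    {x₀ : X} (hx₀ : x₀ ∈ K)
    (hivt : ∀ f : X → ℝ, Continuous f → ∀ y ∈ K, Ioo (f x₀) (f y) ⊆ f '' K) :
    IsPreconnected K := by
  have key : ∀ t t' : Set X, IsClosed t → IsClosed t' → K ⊆ t ∪ t' → x₀ ∈ t →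
      (K ∩ t').Nonempty → (K ∩ (t ∩ t')).Nonempty := by
    rintro t t' ht ht' hK hx₀t ⟨y, hyK, hyt'⟩
    by_contra hdisj
    have hout : ∀ z ∈ K, z ∈ t → z ∉ t' := fun z hzK hzt hzt' => hdisj ⟨z, hzK, hzt, hzt'⟩
    set f : X → ℝ := fun z => infDist z t - infDist z t'
    have hf : Continuous f := (continuous_infDist_pt t).sub (continuous_infDist_pt t')
    have hx₀f : f x₀ < 0 := by
      have := (ht'.notMem_iff_infDist_pos ⟨y, hyt'⟩).mp (hout x₀ hx₀ hx₀t)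
      simp [f, infDist_zero_of_mem hx₀t, this]
    have hyf : 0 < f y := by
      have := (ht.notMem_iff_infDist_pos ⟨x₀, hx₀t⟩).mp fun hyt => hout y hyK hyt hyt'
      simp [f, infDist_zero_of_mem hyt', this]
    obtain ⟨w, hwK, hw⟩ := hivt f hf y hyK ⟨hx₀f, hyf⟩
    have hw_eq : infDist w t = infDist w t' := sub_eq_zero.mp hw
    rcases hK hwK with hwt | hwt'
    · refine hout w hwK hwt ((ht'.mem_iff_infDist_zero ⟨y, hyt'⟩).mpr ?_)
      rw [← hw_eq, infDist_zero_of_mem hwt]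
    · refine hout w hwK ((ht.mem_iff_infDist_zero ⟨x₀, hx₀t⟩).mpr ?_) hwt'
      rw [hw_eq, infDist_zero_of_mem hwt']
  refine isPreconnected_closed_iff.mpr fun t t' ht ht' hK hKt hKt' => ?_
  rcases hK hx₀ with hx₀t | hx₀t'
  · exact key t t' ht ht' hK hx₀t hKt'
  · rw [inter_comm t]
    exact key t' t ht' ht (union_comm t t' ▸ hK) hx₀t' hKt

/-- Lemma 5.3 of the paper.  Let `(X, ρ)` be a proper metric space and
`(A_n)` a sequence of subsets of `X` such that (1) `limsup diam (A_n)` is finite, (2) each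
`A_n` is connected, and (3) there is a Cauchy sequence `(x_n)` with `x_n ∈ A_n` for all `n`.
Then the Kuratowski limit supremum of `(A_n)` is a connected subset of `X`. -/
theorem kuratowskiLimsup_isConnected {X : Type*} [MetricSpace X] [ProperSpace X]
    (A : ℕ → Set X)
    (hdiam : Filter.limsup (fun n => EMetric.diam (A n)) Filter.atTop ≠ ⊤)
    (hconn : ∀ n, IsConnected (A n))
    (x : ℕ → X) (hx : CauchySeq x) (hxA : ∀ n, x n ∈ A n) :
    IsConnected (kuratowskiLimsup A) := by
  obtain ⟨x₀, hx₀⟩ := cauchySeq_tendsto_of_complete hx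
  obtain ⟨R, hR⟩ := eventually_subset_closedBall_of_limsup_ediam_ne_top hdiam hx₀ hxA
  have hx₀K : x₀ ∈ kuratowskiLimsup A :=
    mem_kuratowskiLimsup_of_tendsto hx₀ (Eventually.of_forall hxA)
  refine ⟨⟨x₀, hx₀K⟩, isPreconnected_of_forall_Ioo_subset_image hx₀K fun f hf y hy => ?_⟩
  exact Ioo_subset_image_kuratowskiLimsup (fun n => (hconn n).isPreconnected) hx₀ hxA
    (isCompact_closedBall x₀ R) hR hf hy
end

section
/- For every ξ ∈ S_A, the θ-orbit {θ_v(ξ) : v ∈ ℝ^k} is dense in S_A. -/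
open scoped Matrix

noncomputable section

/-- The integer lattice `ℤ^k` inside `ℝ^k`. -/
def lattice (k : ℕ) : AddSubgroup (Fin k → ℝ) :=
  AddSubgroup.pi Set.univ fun _ => AddSubgroup.zmultiples (1 : ℝ)

/-- The torus `𝕋^k = ℝ^k / ℤ^k`. -/
abbrev Torus (k : ℕ) := (Fin k → ℝ) ⧸ lattice k

/-- The canonical projection `ℝ^k → 𝕋^k`. -/
def torusProj (k : ℕ) : (Fin k → ℝ) →+ Torus k := QuotientAddGroup.mk' (lattice k)

lemma mem_lattice_iff {k : ℕ} {x : Fin k → ℝ} :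
    x ∈ lattice k ↔ ∀ i, ∃ n : ℤ, (n : ℝ) = x i := by
  simp [lattice, AddSubgroup.mem_pi, AddSubgroup.mem_zmultiples_iff, zsmul_eq_mul, mul_one]

variable {k : ℕ}

/-- The real matrix associated with an integer matrix. -/
def Areal (A : Matrix (Fin k) (Fin k) ℤ) : Matrix (Fin k) (Fin k) ℝ :=
  A.map (Int.cast : ℤ → ℝ)

lemma mulVec_lattice_mem (A : Matrix (Fin k) (Fin k) ℤ) {x : Fin k → ℝ}
    (hx : x ∈ lattice k) : Areal A *ᵥ x ∈ lattice k := by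
  rw [mem_lattice_iff] at hx ⊢
  choose n hn using hx
  intro i
  refine ⟨∑ j, A i j * n j, ?_⟩
  have : (Areal A *ᵥ x) i = ∑ j, (A i j : ℝ) * x j := by
    simp [Areal, Matrix.mulVec, dotProduct, Matrix.map_apply]
  rw [this]
  push_cast
  exact Finset.sum_congr rfl fun j _ => by rw [hn j]

/-- The endomorphism of `𝕋^k` induced by the integer matrix `A`. -/
def torusHom (A : Matrix (Fin k) (Fin k) ℤ) : Torus k →+ Torus k :=
  QuotientAddGroup.map (lattice k) (lattice k) (Areal A).mulVecLin.toAddMonoidHom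
    (fun _ hx => mulVec_lattice_mem A hx)

lemma torusHom_proj (A : Matrix (Fin k) (Fin k) ℤ) (x : Fin k → ℝ) :
    torusHom A (torusProj k x) = torusProj k (Areal A *ᵥ x) :=
  QuotientAddGroup.map_mk' _ _ _ _ x

/-- The toral solenoid `S_A`, as an additive subgroup of `(𝕋^k)^ℕ`. -/
def solenoid (A : Matrix (Fin k) (Fin k) ℤ) : AddSubgroup (ℕ → Torus k) where
  carrier := {ξ | ∀ j, ξ j = torusHom A (ξ (j + 1))}
  zero_mem' := by intro j; simp
  add_mem' := by
    intro a b ha hb j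
    simp only [Pi.add_apply, map_add]
    rw [← ha j, ← hb j]
  neg_mem' := by
    intro a ha j
    simp only [Pi.neg_apply, map_neg]
    rw [← ha j]

lemma mem_solenoid {A : Matrix (Fin k) (Fin k) ℤ} {ξ : ℕ → Torus k} :
    ξ ∈ solenoid A ↔ ∀ j, ξ j = torusHom A (ξ (j + 1)) := Iff.rfl

/-- The inverse of the matrix `A` over `ℝ`. -/
def Ainv (A : Matrix (Fin k) (Fin k) ℤ) : Matrix (Fin k) (Fin k) ℝ := (Areal A)⁻¹

lemma Areal_det_isUnit {A : Matrix (Fin k) (Fin k) ℤ} (hA : A.det ≠ 0) :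
    IsUnit (Areal A).det := by
  have h : ((A.det : ℤ) : ℝ) = (Areal A).det :=
    RingHom.map_det (Int.castRingHom ℝ) A
  rw [← h]
  exact isUnit_iff_ne_zero.mpr (by exact_mod_cast hA)

/-- The map `θ_v` on sequences: `(θ_v ξ)_j = ξ_j + [A^{-j} v]`. -/
def thetaFun (A : Matrix (Fin k) (Fin k) ℤ) (v : Fin k → ℝ) (ξ : ℕ → Torus k) :
    ℕ → Torus k :=
  fun j => ξ j + torusProj k ((Ainv A ^ j) *ᵥ v)

lemma thetaFun_mem (A : Matrix (Fin k) (Fin k) ℤ) (hA : A.det ≠ 0) (v : Fin k → ℝ)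
    {ξ : ℕ → Torus k} (hξ : ξ ∈ solenoid A) : thetaFun A v ξ ∈ solenoid A := by
  rw [mem_solenoid] at hξ ⊢
  intro j
  have key : Areal A *ᵥ ((Ainv A ^ (j + 1)) *ᵥ v) = (Ainv A ^ j) *ᵥ v := by
    rw [Matrix.mulVec_mulVec]
    rw [pow_succ', ← Matrix.mul_assoc, Ainv, Matrix.mul_nonsing_inv _ (Areal_det_isUnit hA),
      Matrix.one_mul]
  show ξ j + torusProj k ((Ainv A ^ j) *ᵥ v)
      = torusHom A (ξ (j + 1) + torusProj k ((Ainv A ^ (j + 1)) *ᵥ v))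
  rw [map_add, torusHom_proj, key, ← hξ j]

/-- The homeomorphism `θ_v : S_A → S_A` (Definition 4.1 of the paper). -/
def theta (A : Matrix (Fin k) (Fin k) ℤ) (hA : A.det ≠ 0) (v : Fin k → ℝ)
    (ξ : ↥(solenoid A)) : ↥(solenoid A) :=
  ⟨thetaFun A v ξ, thetaFun_mem A hA v ξ.2⟩

/-- The right shift `σ_A` on sequences. -/
def shiftFun (A : Matrix (Fin k) (Fin k) ℤ) (ξ : ℕ → Torus k) : ℕ → Torus k :=
  fun j => match j with
  | 0 => torusHom A (ξ 0)
  | j + 1 => ξ j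

lemma shiftFun_mem (A : Matrix (Fin k) (Fin k) ℤ) {ξ : ℕ → Torus k}
    (hξ : ξ ∈ solenoid A) : shiftFun A ξ ∈ solenoid A := by
  rw [mem_solenoid] at hξ ⊢
  intro j
  match j with
  | 0 => rfl
  | j + 1 => exact hξ j

/-- The shift automorphism `σ_A : S_A → S_A`. -/
def sigma (A : Matrix (Fin k) (Fin k) ℤ) (ξ : ↥(solenoid A)) : ↥(solenoid A) :=
  ⟨shiftFun A ξ, shiftFun_mem A ξ.2⟩

/-- The inverse shift `σ_A⁻¹` on sequences. -/
def shiftInvFun (ξ : ℕ → Torus k) : ℕ → Torus k := fun j => ξ (j + 1)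

lemma shiftInvFun_mem (A : Matrix (Fin k) (Fin k) ℤ) {ξ : ℕ → Torus k}
    (hξ : ξ ∈ solenoid A) : shiftInvFun ξ ∈ solenoid A :=
  mem_solenoid.mpr fun j => mem_solenoid.mp hξ (j + 1)

/-- The inverse shift `σ_A⁻¹ : S_A → S_A`. -/
def sigmaInv (A : Matrix (Fin k) (Fin k) ℤ) (ξ : ↥(solenoid A)) : ↥(solenoid A) :=
  ⟨shiftInvFun ξ, shiftInvFun_mem A ξ.2⟩

/-- Projection `p₀ : S_A → 𝕋^k` onto the zeroth coordinate. -/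
def pZero (A : Matrix (Fin k) (Fin k) ℤ) : ↥(solenoid A) →+ Torus k :=
  (Pi.evalAddMonoidHom (fun _ : ℕ => Torus k) 0).comp (solenoid A).subtype

/-!
Given `ζ ∈ S_A` and `N`, lift `ζ_N - ξ_N` to some `w ∈ ℝ^k` and put `v = A^N w`. For `j ≤ N`,
the `j`-th coordinate of `θ_v ξ` is `ξ_j + A^{N-j}[w] = ξ_j + (ζ - ξ)_j = ζ_j`, because `ζ - ξ`
lies in the solenoid. So `θ_v ξ` agrees with `ζ` on the first `N + 1` coordinates, and these
points converge to `ζ` in the product topology as `N → ∞`.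
-/

open Filter Topology

variable {A : Matrix (Fin k) (Fin k) ℤ}

lemma Ainv_pow_mul_Areal_pow_add (hA : A.det ≠ 0) (j m : ℕ) :
    Ainv A ^ j * Areal A ^ (j + m) = Areal A ^ m := by
  have hunit : IsUnit (Areal A ^ j).det := by
    rw [Matrix.det_pow]
    exact (Areal_det_isUnit hA).pow j
  rw [Ainv, Matrix.inv_pow', pow_add, ← Matrix.mul_assoc, Matrix.nonsing_inv_mul _ hunit,
    Matrix.one_mul]

lemma torusHom_iterate_torusProj (m : ℕ) (w : Fin k → ℝ) :
    (torusHom A)^[m] (torusProj k w) = torusProj k (Areal A ^ m *ᵥ w) := by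
  induction m with
  | zero => simp
  | succ m ih =>
    rw [Function.iterate_succ_apply', ih, torusHom_proj, Matrix.mulVec_mulVec, ← pow_succ']

lemma solenoid_apply_eq_iterate {η : ℕ → Torus k} (hη : η ∈ solenoid A) (j m : ℕ) :
    η j = (torusHom A)^[m] (η (j + m)) := by
  induction m with
  | zero => rfl
  | succ m ih =>
    rw [Function.iterate_succ_apply, ← Nat.add_assoc, ← mem_solenoid.mp hη (j + m)]
    exact ih

lemma theta_Areal_pow_mulVec_apply (hA : A.det ≠ 0) (ξ : solenoid A) (w : Fin k → ℝ)
    (j m : ℕ) :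
    (theta A hA (Areal A ^ (j + m) *ᵥ w) ξ : ℕ → Torus k) j
      = ξ.val j + (torusHom A)^[m] (torusProj k w) := by
  change ξ.val j + torusProj k (Ainv A ^ j *ᵥ (Areal A ^ (j + m) *ᵥ w)) = _
  rw [Matrix.mulVec_mulVec, Ainv_pow_mul_Areal_pow_add hA, torusHom_iterate_torusProj]

lemma theta_apply_eq_of_le (hA : A.det ≠ 0) (ξ ζ : solenoid A) {N : ℕ} {w : Fin k → ℝ}
    (hw : torusProj k w = ζ.val N - ξ.val N) {j : ℕ} (hjN : j ≤ N) :
    (theta A hA (Areal A ^ N *ᵥ w) ξ : ℕ → Torus k) j = ζ.val j := by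
  obtain ⟨m, rfl⟩ := Nat.exists_eq_add_of_le hjN
  have hdiff : ζ.val j - ξ.val j = (torusHom A)^[m] (ζ.val (j + m) - ξ.val (j + m)) :=
    solenoid_apply_eq_iterate (ζ - ξ).2 j m
  rw [theta_Areal_pow_mulVec_apply, hw, ← hdiff, add_sub_cancel]

lemma tendsto_pi_of_eventually_apply_eq {α ι : Type*} {X : ι → Type*}
    [∀ i, TopologicalSpace (X i)] {l : Filter α} {f : α → ∀ i, X i} {g : ∀ i, X i}
    (h : ∀ i, ∀ᶠ a in l, f a i = g i) : Tendsto f l (𝓝 g) :=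
  tendsto_pi_nhds.mpr fun i => EventuallyEq.tendsto (h i)

theorem theta_orbit_dense_general (k : ℕ) (A : Matrix (Fin k) (Fin k) ℤ) (hA : A.det ≠ 0) (ξ : ↥(solenoid A)) :
    Dense (Set.range fun v : Fin k → ℝ => theta A hA v ξ) := by
  intro ζ
  choose w hw using fun N => QuotientAddGroup.mk'_surjective (lattice k) (ζ.val N - ξ.val N)
  have htendsto : Tendsto (fun N => theta A hA (Areal A ^ N *ᵥ w N) ξ) atTop (𝓝 ζ) := by
    refine tendsto_subtype_rng.mpr (tendsto_pi_of_eventually_apply_eq fun j => ?_)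
    filter_upwards [eventually_ge_atTop j] with N hjN
    exact theta_apply_eq_of_le hA ξ ζ (hw N) hjN
  exact mem_closure_of_tendsto htendsto (Eventually.of_forall fun N => Set.mem_range_self _)

/-- For every `ξ ∈ S_A`, the `θ`-orbit `{θ_v ξ : v ∈ ℝ^k}` is dense
in `S_A`. -/
theorem theta_orbit_dense (k : ℕ) (hk : 1 ≤ k) (A : Matrix (Fin k) (Fin k) ℤ) (hA : A.det ≠ 0) (ξ : ↥(solenoid A)) :
    Dense (Set.range fun v : Fin k → ℝ => theta A hA v ξ) :=
  theta_orbit_dense_general k A hA ξ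
end
end

section
/- The map q̄ : S̄ → S_A, q̄(ξ, v) = θ_v(ξ), is a continuous surjective group homomorphism whose kernel is exactly N = α(ℤ^k) = {(ϑ_{-n}(e), n) : n ∈ ℤ^k}; consequently S̄/N is canonically isomorphic to S_A as a topological group. -/
open scoped Matrix

noncomputable section

variable {k : ℕ}

variable {k : ℕ}

/-- `Σ = p₀⁻¹([0])`, the fiber of the zeroth-coordinate projection over `0`,
as a subgroup of `S_A`. -/
def SigmaGrp (A : Matrix (Fin k) (Fin k) ℤ) : AddSubgroup ↥(solenoid A) :=
  (pZero A).ker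

lemma pZero_theta' (A : Matrix (Fin k) (Fin k) ℤ) (hA : A.det ≠ 0) (v : Fin k → ℝ)
    (ξ : ↥(solenoid A)) :
    pZero A (theta A hA v ξ) = pZero A ξ + torusProj k v := by
  show (ξ : ℕ → Torus k) 0 + torusProj k ((Ainv A ^ 0) *ᵥ v)
      = (ξ : ℕ → Torus k) 0 + torusProj k v
  rw [pow_zero, Matrix.one_mulVec]

/-- The inclusion of an integer vector into `ℝ^k`. -/
def intVec (n : Fin k → ℤ) : Fin k → ℝ := fun i => (n i : ℝ)

lemma intVec_mem_lattice (n : Fin k → ℤ) : intVec n ∈ lattice k :=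
  mem_lattice_iff.mpr fun i => ⟨n i, rfl⟩

lemma theta_neg_intVec_mem (A : Matrix (Fin k) (Fin k) ℤ) (hA : A.det ≠ 0)
    (n : Fin k → ℤ) : theta A hA (-intVec n) 0 ∈ SigmaGrp A := by
  rw [SigmaGrp, AddMonoidHom.mem_ker, pZero_theta', map_zero, zero_add, map_neg, neg_eq_zero]
  exact (QuotientAddGroup.eq_zero_iff _).mpr (intVec_mem_lattice n)

/-- The embedding `α : ℤ^k → S̄ = Σ × ℝ^k`, `α n = (ϑ_{-n}(e), n)`. -/
def alphaMap (A : Matrix (Fin k) (Fin k) ℤ) (hA : A.det ≠ 0) (n : Fin k → ℤ) :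
    ↥(SigmaGrp A) × (Fin k → ℝ) :=
  (⟨theta A hA (-intVec n) 0, theta_neg_intVec_mem A hA n⟩, intVec n)

/-- The map `q̄ : S̄ → S_A`, `q̄(ξ, v) = θ_v ξ`. -/
def qbar (A : Matrix (Fin k) (Fin k) ℤ) (hA : A.det ≠ 0)
    (p : ↥(SigmaGrp A) × (Fin k → ℝ)) : ↥(solenoid A) :=
  theta A hA p.2 ↑p.1

lemma sigma_mem_SigmaGrp (A : Matrix (Fin k) (Fin k) ℤ) {x : ↥(solenoid A)}
    (hx : x ∈ SigmaGrp A) : sigma A x ∈ SigmaGrp A := by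
  rw [SigmaGrp, AddMonoidHom.mem_ker] at hx ⊢
  show torusHom A ((x : ℕ → Torus k) 0) = 0
  rw [show (x : ℕ → Torus k) 0 = 0 from hx, map_zero]

/-- The map `σ̄ : S̄ → S̄`, `σ̄(ξ, v) = (σ_A ξ, A v)`. -/
def sigmabar (A : Matrix (Fin k) (Fin k) ℤ)
    (p : ↥(SigmaGrp A) × (Fin k → ℝ)) : ↥(SigmaGrp A) × (Fin k → ℝ) :=
  (⟨sigma A ↑p.1, sigma_mem_SigmaGrp A p.1.2⟩, Areal A *ᵥ p.2)

/- `q̄(ξ, v) = ξ + θ_v(e)`, so `q̄` is the sum of the inclusion of `Σ` and the homomorphism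
`v ↦ θ_v(e)`, whose zeroth coordinate is `[v]`. Hence `q̄(ξ, v) = 0` forces `[v] = 0`, i.e.
`v = n ∈ ℤ^k` and `ξ = θ_{-n}(e)`; and any `η` is hit by choosing `v` with `[v] = η₀`, so that
`η - θ_v(e) ∈ Σ`. Since `Σ × ℝ^k` is σ-compact and `S_A` is compact, the open mapping theorem makes
the continuous surjection `q̄` open, so the induced isomorphism `S̄/N ≃ S_A` is a homeomorphism. -/

namespace QuotientAddGroup

variable {G H : Type*} [AddGroup G] [TopologicalSpace G] [AddGroup H] [TopologicalSpace H]
  {f : G →+ H} (hf : Function.Surjective f)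

lemma continuous_quotientKerEquivOfSurjective (hc : Continuous f) :
    Continuous (quotientKerEquivOfSurjective f hf) :=
  (isQuotientMap_mk f.ker).continuous_iff.mpr hc

lemma continuous_quotientKerEquivOfSurjective_symm (hq : Topology.IsQuotientMap f) :
    Continuous (quotientKerEquivOfSurjective f hf).symm := by
  refine hq.continuous_iff.mpr ?_
  have hmk : (quotientKerEquivOfSurjective f hf).symm ∘ f = ((↑) : G → G ⧸ f.ker) :=
    funext fun p => (quotientKerEquivOfSurjective f hf).symm_apply_apply (p : G ⧸ f.ker)
  rw [hmk]
  exact continuous_quot_mk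

end QuotientAddGroup

instance : IsClosed (lattice k : Set (Fin k → ℝ)) := by
  have hℤ : (AddSubgroup.zmultiples (1 : ℝ) : Set ℝ) = Set.range ((↑) : ℤ → ℝ) := by
    ext x
    simp [AddSubgroup.mem_zmultiples_iff]
  show IsClosed (Set.univ.pi fun _ => (AddSubgroup.zmultiples (1 : ℝ) : Set ℝ))
  exact isClosed_set_pi fun _ _ => hℤ ▸ Int.isClosedEmbedding_coe_real.isClosed_range

lemma continuous_torusProj : Continuous (torusProj k) := continuous_quot_mk

lemma torusProj_fract (x : Fin k → ℝ) : torusProj k (fun i => Int.fract (x i)) = torusProj k x := by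
  refine QuotientAddGroup.eq_iff_sub_mem.mpr (mem_lattice_iff.mpr fun i => ⟨-⌊x i⌋, ?_⟩)
  exact_mod_cast (Int.fract_sub_self (x i)).symm

instance : CompactSpace (Torus k) := by
  refine ⟨?_⟩
  have hcube : torusProj k '' Set.univ.pi (fun _ => Set.Icc (0 : ℝ) 1) = Set.univ := by
    refine Set.eq_univ_of_forall fun x => ?_
    obtain ⟨y, rfl⟩ := QuotientAddGroup.mk'_surjective (lattice k) x
    exact ⟨fun i => Int.fract (y i),
      fun i _ => ⟨Int.fract_nonneg _, (Int.fract_lt_one _).le⟩, torusProj_fract y⟩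
  exact hcube ▸ (isCompact_univ_pi fun _ => isCompact_Icc).image continuous_torusProj

lemma continuous_torusHom (A : Matrix (Fin k) (Fin k) ℤ) : Continuous (torusHom A) :=
  (QuotientAddGroup.isQuotientMap_mk (lattice k)).continuous_iff.mpr <|
    continuous_torusProj.comp (continuous_const.matrix_mulVec continuous_id)

lemma isClosed_solenoid (A : Matrix (Fin k) (Fin k) ℤ) :
    IsClosed (solenoid A : Set (ℕ → Torus k)) := by
  have h : (solenoid A : Set (ℕ → Torus k)) = ⋂ j, {ξ | ξ j = torusHom A (ξ (j + 1))} := by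
    ext ξ
    simp only [Set.mem_iInter, Set.mem_ofPred_eq, SetLike.mem_coe, mem_solenoid]
  exact h ▸ isClosed_iInter fun j =>
    isClosed_eq (continuous_apply j) ((continuous_torusHom A).comp (continuous_apply (j + 1)))

instance (A : Matrix (Fin k) (Fin k) ℤ) : CompactSpace (solenoid A) :=
  isCompact_iff_compactSpace.mp (isClosed_solenoid A).isCompact

lemma continuous_pZero (A : Matrix (Fin k) (Fin k) ℤ) : Continuous (pZero A) :=
  (continuous_apply 0).comp continuous_subtype_val

instance (A : Matrix (Fin k) (Fin k) ℤ) : CompactSpace (SigmaGrp A) :=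
  isCompact_iff_compactSpace.mp <| IsClosed.isCompact (s := (SigmaGrp A : Set (solenoid A)))
    (isClosed_singleton.preimage (continuous_pZero A))

section Theta

variable (A : Matrix (Fin k) (Fin k) ℤ) (hA : A.det ≠ 0)

def thetaHom : (Fin k → ℝ) →+ solenoid A where
  toFun v := theta A hA v 0
  map_zero' := by
    ext j
    simp [theta, thetaFun]
  map_add' v w := by
    ext j
    simp [theta, thetaFun, Matrix.mulVec_add]

lemma theta_eq_add_thetaHom (v : Fin k → ℝ) (ξ : solenoid A) :
    theta A hA v ξ = ξ + thetaHom A hA v := by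
  ext j
  simp [thetaHom, theta, thetaFun]

lemma pZero_thetaHom (v : Fin k → ℝ) : pZero A (thetaHom A hA v) = torusProj k v := by
  show pZero A (theta A hA v 0) = _
  rw [pZero_theta', map_zero, zero_add]

lemma continuous_thetaHom : Continuous (thetaHom A hA) :=
  Continuous.subtype_mk (continuous_pi fun _ => continuous_const.add <|
    continuous_torusProj.comp (continuous_const.matrix_mulVec continuous_id)) _

def qbarHom : SigmaGrp A × (Fin k → ℝ) →+ solenoid A :=
  (SigmaGrp A).subtype.coprod (thetaHom A hA)

lemma coe_qbarHom : ⇑(qbarHom A hA) = qbar A hA :=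
  funext fun p => (theta_eq_add_thetaHom A hA p.2 p.1).symm

lemma continuous_qbar : Continuous (qbar A hA) :=
  coe_qbarHom A hA ▸ (continuous_subtype_val.comp continuous_fst).add
    ((continuous_thetaHom A hA).comp continuous_snd)

lemma qbar_surjective : Function.Surjective (qbar A hA) := by
  intro η
  obtain ⟨v, hv⟩ := QuotientAddGroup.mk'_surjective (lattice k) ((η : ℕ → Torus k) 0)
  have hmem : η - thetaHom A hA v ∈ SigmaGrp A := by
    rw [SigmaGrp, AddMonoidHom.mem_ker, map_sub, pZero_thetaHom]
    exact sub_eq_zero.mpr hv.symm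
  refine ⟨(⟨_, hmem⟩, v), ?_⟩
  rw [← coe_qbarHom, qbarHom, AddMonoidHom.coprod_apply, AddSubgroup.coe_subtype, sub_add_cancel]

lemma coe_alphaMap_fst (n : Fin k → ℤ) :
    ((alphaMap A hA n).1 : solenoid A) = -thetaHom A hA (intVec n) := by
  rw [← map_neg]
  rfl

lemma qbar_eq_zero_iff (p : SigmaGrp A × (Fin k → ℝ)) :
    qbar A hA p = 0 ↔ p ∈ Set.range (alphaMap A hA) := by
  rw [← coe_qbarHom, qbarHom, AddMonoidHom.coprod_apply, AddSubgroup.coe_subtype,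
    add_eq_zero_iff_eq_neg]
  constructor
  · intro hp
    have hv : p.2 ∈ lattice k := by
      have hp₁ : pZero A p.1 = 0 := p.1.2
      rw [hp, map_neg, pZero_thetaHom, neg_eq_zero] at hp₁
      exact (QuotientAddGroup.eq_zero_iff _).mp hp₁
    choose n hn using mem_lattice_iff.mp hv
    have hvn : intVec n = p.2 := funext hn
    refine ⟨n, Prod.ext (Subtype.ext ?_) hvn⟩
    rw [coe_alphaMap_fst, hvn, hp]
  · rintro ⟨n, rfl⟩
    exact coe_alphaMap_fst A hA n

end Theta

theorem qbar_surjective_ker_alpha_general (k : ℕ) (A : Matrix (Fin k) (Fin k) ℤ) (hA : A.det ≠ 0) :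
    Continuous (qbar A hA) ∧
    (∀ p q : ↥(SigmaGrp A) × (Fin k → ℝ), qbar A hA (p + q) = qbar A hA p + qbar A hA q) ∧
    Function.Surjective (qbar A hA) ∧
    (∀ p : ↥(SigmaGrp A) × (Fin k → ℝ),
      qbar A hA p = 0 ↔ p ∈ Set.range (alphaMap A hA)) ∧
    (∀ N : AddSubgroup (↥(SigmaGrp A) × (Fin k → ℝ)),
      (N : Set (↥(SigmaGrp A) × (Fin k → ℝ))) = Set.range (alphaMap A hA) →
      ∃ φ : ((↥(SigmaGrp A) × (Fin k → ℝ)) ⧸ N) ≃+ ↥(solenoid A),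
        Continuous φ ∧ Continuous φ.symm ∧
        ∀ p : ↥(SigmaGrp A) × (Fin k → ℝ), φ (QuotientAddGroup.mk p) = qbar A hA p) := by
  have hsurj : Function.Surjective (qbarHom A hA) := coe_qbarHom A hA ▸ qbar_surjective A hA
  have hcont : Continuous (qbarHom A hA) := coe_qbarHom A hA ▸ continuous_qbar A hA
  have hopen : IsOpenMap (qbarHom A hA) := AddMonoidHom.isOpenMap_of_sigmaCompact _ hsurj hcont
  refine ⟨continuous_qbar A hA, coe_qbarHom A hA ▸ map_add (qbarHom A hA),
    qbar_surjective A hA, qbar_eq_zero_iff A hA, fun N hN => ?_⟩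
  obtain rfl : N = (qbarHom A hA).ker := SetLike.coe_injective <| hN.trans <|
    Set.ext fun p => by rw [SetLike.mem_coe, AddMonoidHom.mem_ker, coe_qbarHom, qbar_eq_zero_iff]
  exact ⟨QuotientAddGroup.quotientKerEquivOfSurjective _ hsurj,
    QuotientAddGroup.continuous_quotientKerEquivOfSurjective hsurj hcont,
    QuotientAddGroup.continuous_quotientKerEquivOfSurjective_symm hsurj
      (hopen.isQuotientMap hcont hsurj),
    congrFun (coe_qbarHom A hA)⟩

/-- `q̄ : S̄ → S_A`, `q̄(ξ, v) = θ_v ξ`, is a continuous surjective group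
homomorphism with kernel exactly `N = α(ℤ^k)`; consequently `S̄/N` is canonically isomorphic to
`S_A` as a topological group. -/
theorem qbar_surjective_ker_alpha (k : ℕ) (hk : 1 ≤ k) (A : Matrix (Fin k) (Fin k) ℤ) (hA : A.det ≠ 0) :
    Continuous (qbar A hA) ∧
    (∀ p q : ↥(SigmaGrp A) × (Fin k → ℝ), qbar A hA (p + q) = qbar A hA p + qbar A hA q) ∧
    Function.Surjective (qbar A hA) ∧
    (∀ p : ↥(SigmaGrp A) × (Fin k → ℝ),
      qbar A hA p = 0 ↔ p ∈ Set.range (alphaMap A hA)) ∧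
    (∀ N : AddSubgroup (↥(SigmaGrp A) × (Fin k → ℝ)),
      (N : Set (↥(SigmaGrp A) × (Fin k → ℝ))) = Set.range (alphaMap A hA) →
      ∃ φ : ((↥(SigmaGrp A) × (Fin k → ℝ)) ⧸ N) ≃+ ↥(solenoid A),
        Continuous φ ∧ Continuous φ.symm ∧
        ∀ p : ↥(SigmaGrp A) × (Fin k → ℝ), φ (QuotientAddGroup.mk p) = qbar A hA p) :=
  qbar_surjective_ker_alpha_general k A hA

end
end

section
/- If |det A| = 1 then Σ = {e} is the trivial group. If |det A| > 1 then Σ is homeomorphic to the Cantor set; equivalently, Σ is a nonempty, compact, metrizable, perfect, totally disconnected topological space. -/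
/-!
A point ξ of Σ satisfies ξ₀ = Aʲ ξⱼ = 0, so its `j`-th coordinate lies in `ker Aʲ`, which is
finite because `adj(B) B = det B` puts `ker B` inside the `det B`-torsion of `𝕋^k`. Hence
`ξ ↦ (ξⱼ)ⱼ` embeds Σ as a closed subset of a countable product of finite discrete groups, so Σ is
compact, metrizable and totally disconnected; when `|det A| = 1` all these kernels vanish and
Σ = {e}. When `|det A| > 1`, `ker A ≠ 0` (otherwise `A⁻¹` would preserve `ℤ^k`), and σ_A maps Σ
injectively into `{ξ ∈ Σ | ξ₁ = 0}`, which misses `σ_A η ∈ Σ` for any η with `η₀ ∈ ker A ∖ 0`.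
So Σ is an infinite compact group, hence not discrete, hence without isolated points.
-/

open scoped Matrix

noncomputable section

variable {k : ℕ}

variable {k : ℕ}

open Topology

theorem perfectSpace_of_infinite_of_compactSpace {G : Type*} [AddGroup G] [TopologicalSpace G]
    [IsTopologicalAddGroup G] [CompactSpace G] [Infinite G] : PerfectSpace G := by
  refine perfectSpace_iff_forall_not_isolated.mpr fun x => ?_
  rw [Filter.neBot_iff, Ne, ← isOpen_singleton_iff_punctured_nhds]
  intro hx
  have : DiscreteTopology G := discreteTopology_of_isOpen_singleton_zero (by
    simpa using hx.preimage (continuous_add_const x))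
  exact not_finite_iff_infinite.mpr ‹_› finite_of_compact_of_discrete

-- Makes the quotient `Torus k` Hausdorff.
instance isClosed_lattice (k : ℕ) : IsClosed (lattice k : Set (Fin k → ℝ)) := by
  have : (lattice k : Set (Fin k → ℝ)) = Set.univ.pi fun _ => Set.range ((↑) : ℤ → ℝ) := by
    ext x
    simp [mem_lattice_iff]
  rw [this]
  exact isClosed_set_pi fun _ _ => Int.isClosedEmbedding_coe_real.isClosed_range

section Torus

variable {k : ℕ}

lemma torusProj_surjective : Function.Surjective (torusProj k) :=
  QuotientAddGroup.mk'_surjective _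

lemma torusProj_eq_zero_iff {v : Fin k → ℝ} : torusProj k v = 0 ↔ v ∈ lattice k :=
  QuotientAddGroup.eq_zero_iff v

lemma intVec_injective : Function.Injective (intVec : (Fin k → ℤ) → Fin k → ℝ) :=
  fun _ _ h => funext fun i => Int.cast_injective (congrFun h i)

lemma mem_lattice_iff_exists_intVec {v : Fin k → ℝ} : v ∈ lattice k ↔ ∃ n, intVec n = v := by
  rw [mem_lattice_iff]
  exact ⟨fun h => ⟨fun i => (h i).choose, funext fun i => (h i).choose_spec⟩,
    fun ⟨n, hn⟩ i => ⟨n i, congrFun hn i⟩⟩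

lemma Areal_eq_mapMatrix (A : Matrix (Fin k) (Fin k) ℤ) :
    Areal A = (Int.castRingHom ℝ).mapMatrix A := rfl

lemma Areal_mulVec_intVec (A : Matrix (Fin k) (Fin k) ℤ) (n : Fin k → ℤ) :
    Areal A *ᵥ intVec n = intVec (A *ᵥ n) := by
  funext i
  simp [Areal, intVec, Matrix.mulVec, dotProduct]

lemma Areal_mul_Ainv {A : Matrix (Fin k) (Fin k) ℤ} (hA : A.det ≠ 0) : Areal A * Ainv A = 1 :=
  Matrix.mul_nonsing_inv _ (Areal_det_isUnit hA)

lemma torusHom_one : torusHom (1 : Matrix (Fin k) (Fin k) ℤ) = AddMonoidHom.id _ := by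
  refine AddMonoidHom.ext fun x => ?_
  obtain ⟨v, rfl⟩ := torusProj_surjective x
  rw [torusHom_proj, Areal_eq_mapMatrix, map_one, Matrix.one_mulVec, AddMonoidHom.id_apply]

lemma torusHom_mul (A B : Matrix (Fin k) (Fin k) ℤ) :
    torusHom (A * B) = (torusHom A).comp (torusHom B) := by
  refine AddMonoidHom.ext fun x => ?_
  obtain ⟨v, rfl⟩ := torusProj_surjective x
  rw [AddMonoidHom.comp_apply, torusHom_proj, torusHom_proj, torusHom_proj, Areal_eq_mapMatrix,
    map_mul, Matrix.mulVec_mulVec]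
  rfl

lemma torusHom_smul_one (n : ℤ) (x : Torus k) : torusHom (n • 1) x = n • x := by
  obtain ⟨v, rfl⟩ := torusProj_surjective x
  rw [torusHom_proj, Areal_eq_mapMatrix, map_zsmul, map_one, Matrix.smul_mulVec, Matrix.one_mulVec,
    map_zsmul]

lemma torusHom_Ainv {A : Matrix (Fin k) (Fin k) ℤ} (hA : A.det ≠ 0) (v : Fin k → ℝ) :
    torusHom A (torusProj k (Ainv A *ᵥ v)) = torusProj k v := by
  rw [torusHom_proj, Matrix.mulVec_mulVec, Areal_mul_Ainv hA, Matrix.one_mulVec]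

lemma torusHom_surjective {A : Matrix (Fin k) (Fin k) ℤ} (hA : A.det ≠ 0) :
    Function.Surjective (torusHom A) := by
  intro x
  obtain ⟨v, rfl⟩ := torusProj_surjective x
  exact ⟨_, torusHom_Ainv hA v⟩

lemma det_zsmul_eq_zero_of_mem_ker {B : Matrix (Fin k) (Fin k) ℤ} {x : Torus k}
    (hx : x ∈ (torusHom B).ker) : B.det • x = 0 := by
  rw [← torusHom_smul_one, ← Matrix.adjugate_mul, torusHom_mul, AddMonoidHom.comp_apply,
    AddMonoidHom.mem_ker.mp hx, map_zero]

def toAddCircles (k : ℕ) : Torus k →+ (Fin k → AddCircle (1 : ℝ)) :=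
  QuotientAddGroup.lift (lattice k)
    (AddMonoidHom.pi fun i => (QuotientAddGroup.mk' _).comp (Pi.evalAddMonoidHom _ i))
    fun v hv => by
      funext i
      exact (QuotientAddGroup.eq_zero_iff _).mpr ((AddSubgroup.mem_pi _).mp hv i trivial)

lemma toAddCircles_injective : Function.Injective (toAddCircles k) := by
  refine (injective_iff_map_eq_zero _).mpr fun x hx => ?_
  obtain ⟨v, rfl⟩ := torusProj_surjective x
  refine torusProj_eq_zero_iff.mpr ((AddSubgroup.mem_pi _).mpr fun i _ => ?_)
  exact (QuotientAddGroup.eq_zero_iff _).mp (congrFun hx i)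

lemma finite_setOf_nsmul_eq_zero {n : ℕ} (hn : 0 < n) : {x : Torus k | n • x = 0}.Finite := by
  refine ((Set.Finite.pi fun _ => AddCircle.finite_torsion 1 hn).preimage
    toAddCircles_injective.injOn).subset fun x (hx : n • x = 0) i _ => ?_
  show n • toAddCircles k x i = 0
  rw [← Pi.smul_apply, ← map_nsmul, hx, map_zero, Pi.zero_apply]

lemma finite_ker_torusHom {B : Matrix (Fin k) (Fin k) ℤ} (hB : B.det ≠ 0) :
    Finite (torusHom B).ker :=
  (finite_setOf_nsmul_eq_zero (Int.natAbs_pos.mpr hB)).subset fun _ hx =>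
    natAbs_nsmul_eq_zero.mpr (det_zsmul_eq_zero_of_mem_ker hx)

lemma ker_torusHom_eq_bot {A : Matrix (Fin k) (Fin k) ℤ} (h : |A.det| = 1) :
    (torusHom A).ker = ⊥ := by
  refine (AddSubgroup.eq_bot_iff_forall _).mpr fun x hx => ?_
  have := det_zsmul_eq_zero_of_mem_ker hx
  rcases abs_eq (zero_le_one' ℤ) |>.mp h with h | h <;> simpa [h] using this

lemma exists_ne_zero_mem_ker_torusHom {A : Matrix (Fin k) (Fin k) ℤ} (h : 1 < |A.det|) :
    ∃ c ≠ 0, c ∈ (torusHom A).ker := by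
  have hA : A.det ≠ 0 := abs_pos.mp (zero_lt_one.trans h)
  by_contra! hker
  suffices IsUnit A by
    rw [Matrix.isUnit_iff_isUnit_det, Int.isUnit_iff_abs_eq] at this
    exact h.ne' this
  rw [← Matrix.mulVec_surjective_iff_isUnit]
  intro m
  have hm : torusProj k (Ainv A *ᵥ intVec m) = 0 := by
    by_contra hne
    exact hker _ hne (by
      rw [AddMonoidHom.mem_ker, torusHom_Ainv hA, torusProj_eq_zero_iff,
        mem_lattice_iff_exists_intVec]
      exact ⟨m, rfl⟩)
  obtain ⟨n, hn⟩ := mem_lattice_iff_exists_intVec.mp (torusProj_eq_zero_iff.mp hm)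
  refine ⟨n, intVec_injective ?_⟩
  rw [← Areal_mulVec_intVec, hn, Matrix.mulVec_mulVec, Areal_mul_Ainv hA, Matrix.one_mulVec]

end Torus

section Solenoid

variable {k : ℕ} {A : Matrix (Fin k) (Fin k) ℤ}

lemma solenoid_apply_zero {ξ : ℕ → Torus k} (hξ : ξ ∈ solenoid A) (j : ℕ) :
    ξ 0 = torusHom (A ^ j) (ξ j) := by
  induction j with
  | zero => rw [pow_zero, torusHom_one, AddMonoidHom.id_apply]
  | succ j ih => rw [ih, mem_solenoid.mp hξ j, pow_succ, torusHom_mul, AddMonoidHom.comp_apply]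

lemma pZero_surjective (hA : A.det ≠ 0) : Function.Surjective (pZero A) := by
  intro c
  choose f hf using torusHom_surjective hA
  refine ⟨⟨fun j => f^[j] c, fun j => ?_⟩, rfl⟩
  show f^[j] c = torusHom A (f^[j + 1] c)
  rw [Function.iterate_succ_apply', hf]

lemma apply_mem_ker_of_mem_SigmaGrp {x : solenoid A} (hx : x ∈ SigmaGrp A) (j : ℕ) :
    (x : ℕ → Torus k) j ∈ (torusHom (A ^ j)).ker := by
  rw [AddMonoidHom.mem_ker, ← solenoid_apply_zero x.2]
  exact hx

def sigmaCoords (A : Matrix (Fin k) (Fin k) ℤ) (x : SigmaGrp A) : ∀ j, (torusHom (A ^ j)).ker :=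
  fun j => ⟨((x : solenoid A) : ℕ → Torus k) j, apply_mem_ker_of_mem_SigmaGrp x.2 j⟩

lemma finite_ker_torusHom_pow (hA : A.det ≠ 0) (j : ℕ) : Finite (torusHom (A ^ j)).ker :=
  finite_ker_torusHom (by rw [Matrix.det_pow]; exact pow_ne_zero j hA)

lemma isClosedEmbedding_sigmaCoords (hA : A.det ≠ 0) : IsClosedEmbedding (sigmaCoords A) := by
  have := finite_ker_torusHom_pow hA
  have hinj : Function.Injective (sigmaCoords A) := fun x y h =>
    Subtype.ext (Subtype.ext (funext fun j => congrArg Subtype.val (congrFun h j)))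
  have hind : IsInducing (sigmaCoords A) :=
    (IsInducing.of_comp_iff (IsInducing.piMap fun _ => IsInducing.subtypeVal)).mp
      (IsInducing.subtypeVal.comp IsInducing.subtypeVal)
  have hrange : Set.range (sigmaCoords A) =
      {y | ∀ j, (y j : Torus k) = torusHom A (y (j + 1))} := by
    ext y
    refine ⟨?_, fun hy => ?_⟩
    · rintro ⟨x, rfl⟩
      exact mem_solenoid.mp (x : solenoid A).2
    · have h0 : (y 0 : Torus k) = 0 := by
        simpa [torusHom_one] using (y 0).2
      exact ⟨⟨⟨fun j => y j, hy⟩, h0⟩, rfl⟩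
  refine ⟨⟨hind, hinj⟩, ?_⟩
  rw [hrange, Set.ofPred_forall]
  exact isClosed_iInter fun j => isClosed_eq (continuous_subtype_val.comp (continuous_apply j))
    ((continuous_of_discreteTopology (f := fun z : (torusHom (A ^ (j + 1))).ker =>
      torusHom A z)).comp (continuous_apply (j + 1)))

lemma SigmaGrp_eq_bot (h : |A.det| = 1) : SigmaGrp A = ⊥ := by
  refine (AddSubgroup.eq_bot_iff_forall _).mpr fun x hx => Subtype.ext (funext fun j => ?_)
  have hj : |(A ^ j).det| = 1 := by rw [Matrix.det_pow, abs_pow, h, one_pow]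
  simpa [ker_torusHom_eq_bot hj] using apply_mem_ker_of_mem_SigmaGrp hx j

def sigmaRestrict (A : Matrix (Fin k) (Fin k) ℤ) (x : SigmaGrp A) : SigmaGrp A :=
  ⟨sigma A x, sigma_mem_SigmaGrp A x.2⟩

lemma sigmaRestrict_injective : Function.Injective (sigmaRestrict A) := by
  intro x y h
  exact Subtype.ext (Subtype.ext (funext fun j =>
    congrFun (congrArg (fun z : SigmaGrp A => ((z : solenoid A) : ℕ → Torus k)) h) (j + 1)))

lemma infinite_SigmaGrp (h : 1 < |A.det|) : Infinite (SigmaGrp A) := by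
  obtain ⟨c, hc, hcker⟩ := exists_ne_zero_mem_ker_torusHom h
  obtain ⟨η, hη⟩ := pZero_surjective (abs_pos.mp (zero_lt_one.trans h)) c
  have hση : sigma A η ∈ SigmaGrp A := show torusHom A (pZero A η) = 0 from hη ▸ hcker
  refine not_finite_iff_infinite.mp fun _ => ?_
  obtain ⟨x, hx⟩ := (Finite.surjective_of_injective (α := SigmaGrp A) sigmaRestrict_injective)
    ⟨sigma A η, hση⟩
  apply hc
  rw [← hη]
  exact (congrArg (fun z : SigmaGrp A => ((z : solenoid A) : ℕ → Torus k) 1) hx).symm.trans x.2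

end Solenoid

theorem SigmaGrp_trivial_or_Cantor_general (k : ℕ) (A : Matrix (Fin k) (Fin k) ℤ) :
    (|A.det| = 1 → SigmaGrp A = ⊥) ∧
    (1 < |A.det| →
      Nonempty ↥(SigmaGrp A) ∧
      CompactSpace ↥(SigmaGrp A) ∧
      TopologicalSpace.MetrizableSpace ↥(SigmaGrp A) ∧
      Perfect (Set.univ : Set ↥(SigmaGrp A)) ∧
      TotallyDisconnectedSpace ↥(SigmaGrp A)) := by
  refine ⟨SigmaGrp_eq_bot, fun h => ?_⟩
  have hA : A.det ≠ 0 := abs_pos.mp (zero_lt_one.trans h)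
  have := finite_ker_torusHom_pow hA
  have hΦ := isClosedEmbedding_sigmaCoords hA
  have := hΦ.compactSpace
  have := infinite_SigmaGrp h
  have := perfectSpace_of_infinite_of_compactSpace (G := SigmaGrp A)
  exact ⟨⟨0⟩, inferInstance, hΦ.isEmbedding.metrizableSpace, PerfectSpace.univ_perfect _,
    hΦ.isEmbedding.isTotallyDisconnected_range.mp
      (isTotallyDisconnected_of_totallyDisconnectedSpace _)⟩

/-- If `|det A| = 1` then `Σ` is the trivial group.  If `|det A| > 1` then `Σ`
is homeomorphic to the Cantor set; equivalently, `Σ` is a nonempty, compact, metrizable, perfect,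
totally disconnected topological space. -/
theorem SigmaGrp_trivial_or_Cantor (k : ℕ) (hk : 1 ≤ k) (A : Matrix (Fin k) (Fin k) ℤ) (hA : A.det ≠ 0) :
    (|A.det| = 1 → SigmaGrp A = ⊥) ∧
    (1 < |A.det| →
      Nonempty ↥(SigmaGrp A) ∧
      CompactSpace ↥(SigmaGrp A) ∧
      TopologicalSpace.MetrizableSpace ↥(SigmaGrp A) ∧
      Perfect (Set.univ : Set ↥(SigmaGrp A)) ∧
      TotallyDisconnectedSpace ↥(SigmaGrp A)) :=
  SigmaGrp_trivial_or_Cantor_general k A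

end
end
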